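/- Let G be a group with a function L : G → ℝ. If CovSpec(L) ⊆ (0, 1) (equivalently, no δ ≥ 1 lies in the covering spectrum), then G is generated by the set {g ∈ G : L(g) < 2}; that is, π(L, 1) = G. -/
import Mathlib


/-- The δ-covering group: the subgroup of `G` generated by elements of `L`-length
less than `2δ`. -/
def piGroup {G : Type*} [Group G] (L : G → ℝ) (δ : ℝ) : Subgroup G :=
  Subgroup.closure {g : G | L g < 2 * δ}

/-- The covering spectrum determined by the (infinite rescaled) length function `L`. -/
def covSpec {G : Type*} [Group G] (L : G → ℝ) : Set ℝ :=
  {δ : ℝ | 0 < δ ∧ ∀ δ' > δ, piGroup L δ ≠ piGroup L δ'}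

lemma piGroup_mono {G : Type*} [Group G] (L : G → ℝ) {δ δ' : ℝ} (hδ : δ ≤ δ') :
    piGroup L δ ≤ piGroup L δ' :=
  Subgroup.closure_mono (fun g hg => by
    simp only [Set.mem_setOf_eq] at hg ⊢; linarith)

lemma exists_lt_of_mem_piGroup {G : Type*} [Group G] (L : G → ℝ) {δ : ℝ} (hδ : 0 < δ)
    {g : G} (hg : g ∈ piGroup L δ) : ∃ δ' < δ, g ∈ piGroup L δ' := by
  induction hg using Subgroup.closure_induction with
  | mem x hx =>
    refine ⟨max (δ / 2) ((L x / 2 + δ) / 2), ?_, ?_⟩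
    · have hx' : L x < 2 * δ := hx
      exact max_lt (by linarith) (by linarith)
    · exact Subgroup.subset_closure (by
        simp only [Set.mem_setOf_eq]
        have h2 : L x < 2 * ((L x / 2 + δ) / 2) := by
          have : L x < 2 * δ := hx
          linarith
        calc L x < 2 * ((L x / 2 + δ) / 2) := h2
          _ ≤ 2 * max (δ / 2) ((L x / 2 + δ) / 2) := by
              have := le_max_right (δ / 2) ((L x / 2 + δ) / 2); linarith)
  | one => exact ⟨δ / 2, by linarith, one_mem _⟩
  | mul x y _ _ hx hy =>
    obtain ⟨a, ha, hxa⟩ := hx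
    obtain ⟨b, hb, hyb⟩ := hy
    exact ⟨max a b, max_lt ha hb,
      mul_mem (piGroup_mono L (le_max_left a b) hxa)
        (piGroup_mono L (le_max_right a b) hyb)⟩
  | inv x _ hx =>
    obtain ⟨a, ha, hxa⟩ := hx
    exact ⟨a, ha, inv_mem hxa⟩

/-- If the covering spectrum is contained in `(0,1)`, then the whole group is
generated by the elements of `L`-length less than `2`, i.e. `π(L,1) = G`. -/
theorem piGroup_one_eq_top_of_covSpec_subset_Ioo {G : Type*} [Group G] (L : G → ℝ)
    (h : covSpec L ⊆ Set.Ioo (0 : ℝ) 1) :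
    piGroup L 1 = ⊤ := by
  by_contra hne
  obtain ⟨g, hg⟩ : ∃ g : G, g ∉ piGroup L 1 := by
    by_contra hall
    push_neg at hall
    exact hne (Subgroup.eq_top_iff' _ |>.mpr hall)
  set A : Set ℝ := {δ : ℝ | 1 ≤ δ ∧ g ∉ piGroup L δ} with hA
  have hA1 : (1 : ℝ) ∈ A := ⟨le_refl 1, hg⟩
  have hbdd : BddAbove A := by
    refine ⟨L g / 2, fun δ hδ => ?_⟩
    by_contra hlt
    push_neg at hlt
    exact hδ.2 (Subgroup.subset_closure (show L g < 2 * δ by linarith))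
  set δs := sSup A with hδs
  have h1δ : (1 : ℝ) ≤ δs := le_csSup hbdd hA1
  have hmem : δs ∈ covSpec L := by
    constructor
    · linarith
    · intro δ' hδ' heq
      have hgδ' : g ∈ piGroup L δ' := by
        by_contra hng
        have : δ' ∈ A := ⟨by linarith, hng⟩
        exact absurd (le_csSup hbdd this) (not_le.mpr hδ')
      have hgδs : g ∈ piGroup L δs := heq ▸ hgδ'
      obtain ⟨a, ha, hga⟩ := exists_lt_of_mem_piGroup L (by linarith) hgδs
      obtain ⟨b, hbA, hab⟩ := exists_lt_of_lt_csSup ⟨1, hA1⟩ ha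
      exact hbA.2 (piGroup_mono L hab.le hga)
  exact absurd (h hmem).2 (not_lt.mpr h1δ)
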